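/- arXiv:0707.2119 — 2 statements merged into one kernel-verified Lean document; each statement's English description precedes it below -/
import Mathlib

section
/- Fix l ≥ 1 and set μ = 1 + ν₂(l). For every k ≥ 0, ν₂(A_{l, l+(k+1)·2^μ}) ≠ ν₂(A_{l, l+(k+1)·2^μ − 1}); that is, consecutive blocks of length 2^μ take distinct constant values. -/
/-!
The sum defining `A l m` is holonomic: a Zeilberger certificate gives the recurrence
`(p + 1) A(l, l+p+1) = (2l+4p+3)(2l+p+1) A(l, l+p) - l A(l+1, l+p)`.
By induction on `p`, the 2-adic valuation of the second term exceeds that of the first by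
`ν₂(l) + 1 + ν₂(p)`, which yields `ν₂(A(l, l+p)) = l + ν₂((2l+p)!) - ν₂(p!)`. Consecutive values
therefore differ in valuation by `ν₂(2l+p+1) - ν₂(p+1)`. For `p + 1 = (k+1) 2^(1+ν₂(l))` write
`2l = 2^(1+ν₂(l)) u` with `u` odd: exactly one of `u + (k+1)` and `k+1` is even, so the
difference is nonzero.
-/

open Finset

noncomputable def A (l m : ℕ) : ℚ :=
  ((l.factorial * m.factorial : ℕ) : ℚ) / 2 ^ (m - l) *
    ∑ k ∈ Finset.Icc l m,
      (2 : ℚ) ^ k * ((2 * m - 2 * k).choose (m - k)) * ((m + k).choose m) * (k.choose l)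

open Nat

namespace Nat

variable {K : Type*} [Field K] [CharZero K]

theorem cast_choose_succ_succ (n k : ℕ) :
    ((n + 1).choose (k + 1) : K) = (n + 1) / (k + 1) * n.choose k := by
  rw [div_mul_eq_mul_div, eq_div_iff (cast_add_one_ne_zero k)]
  exact_mod_cast (add_one_mul_choose_eq n k).symm

theorem cast_choose_succ_right (n k : ℕ) :
    (n.choose (k + 1) : K) = (n - k) / (k + 1) * n.choose k := by
  rcases le_or_gt k n with hkn | hnk
  · rw [div_mul_eq_mul_div, eq_div_iff (cast_add_one_ne_zero k), ← Nat.cast_sub hkn]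
    exact_mod_cast (choose_succ_right_eq n k).trans (Nat.mul_comm _ _)
  · simp [choose_eq_zero_of_lt hnk, choose_eq_zero_of_lt (hnk.trans (lt_add_one k))]

theorem cast_add_choose_succ_left (a b : ℕ) :
    ((a + 1 + b).choose (a + 1) : K) = (a + b + 1) / (a + 1) * (a + b).choose a := by
  rw [Nat.add_right_comm, cast_choose_succ_succ]
  push_cast
  ring

theorem cast_add_choose_succ_right (a b : ℕ) :
    ((a + (b + 1)).choose a : K) = (a + b + 1) / (b + 1) * (a + b).choose a := by
  rw [choose_symm_add, Nat.add_comm, cast_add_choose_succ_left, Nat.add_comm b, ← choose_symm_add]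
  ring

theorem cast_centralBinom_succ (n : ℕ) :
    ((n + 1).centralBinom : K) = 2 * (2 * n + 1) / (n + 1) * n.centralBinom := by
  rw [div_mul_eq_mul_div, eq_div_iff (cast_add_one_ne_zero n), mul_comm]
  exact_mod_cast succ_mul_centralBinom_succ n

end Nat

noncomputable def summand (l m k : ℕ) : ℚ :=
  2 ^ k * (m - k).centralBinom * (m + k).choose m * k.choose l

-- Zeilberger certificate for the recurrence `ASum_recurrence`.
noncomputable def cert (l m k : ℕ) : ℚ :=
  -2 * (m + 1) * (l + 1) * 2 ^ k * (m + 1 - k).centralBinom * (m + k).choose m * k.choose (l + 1)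

theorem summand_telescope (l m k : ℕ) (hk : k ≤ m) :
    (m + 1 : ℚ) * (m + 1 - l) * summand l (m + 1) k
        - 2 * (4 * m + 3 - 2 * l) * (m + 1 + l) * summand l m k
        + 4 * l * (l + 1) * summand (l + 1) m k =
      cert l m (k + 1) - cert l m k := by
  obtain ⟨a, rfl⟩ := Nat.exists_eq_add_of_le hk
  have e1 : k + a + 1 - k = a + 1 := by omega
  have e2 : k + a - k = a := by omega
  have e3 : k + a + 1 - (k + 1) = a := by omega
  simp only [summand, cert, e1, e2, e3]
  rw [Nat.cast_centralBinom_succ, Nat.cast_add_choose_succ_left, Nat.cast_add_choose_succ_right,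
    Nat.cast_choose_succ_succ k l, Nat.cast_choose_succ_right k l]
  push_cast
  field_simp
  ring

theorem cert_zero (l m : ℕ) : cert l m 0 = 0 := by
  simp [cert]

theorem summand_self (l m : ℕ) :
    (m + 1 : ℚ) * (m + 1 - l) * summand l (m + 1) (m + 1) = -cert l m (m + 1) := by
  simp only [summand, cert, Nat.sub_self]
  rw [Nat.cast_add_choose_succ_left m (m + 1), Nat.cast_choose_succ_right (m + 1) l]
  push_cast
  field_simp
  ring

noncomputable def ASum (l m : ℕ) : ℚ := ∑ k ∈ range (m + 1), summand l m k

theorem A_eq_mul_ASum (l m : ℕ) : A l m = ((l ! * m ! : ℕ) : ℚ) / 2 ^ (m - l) * ASum l m := by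
  have hsummand (k : ℕ) : summand l m k =
      2 ^ k * ((2 * m - 2 * k).choose (m - k)) * ((m + k).choose m) * (k.choose l) := by
    rw [summand, centralBinom, Nat.mul_sub]
  rw [A, ASum]
  simp_rw [hsummand]
  congr 1
  refine sum_subset (fun k hk => ?_) (fun k hk hkl => ?_)
  · simp only [mem_Icc, mem_range] at hk ⊢
    omega
  · have hkl : k < l := by
      simp only [mem_Icc, mem_range, not_and, not_le] at hk hkl
      omega
    simp [choose_eq_zero_of_lt hkl]

theorem ASum_eq_zero_of_lt {l m : ℕ} (h : m < l) : ASum l m = 0 :=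
  sum_eq_zero fun k hk => by
    simp [summand, choose_eq_zero_of_lt (lt_of_lt_of_le (mem_range.mp hk) h)]

theorem A_eq_zero_of_lt {l m : ℕ} (h : m < l) : A l m = 0 := by
  rw [A_eq_mul_ASum, ASum_eq_zero_of_lt h, mul_zero]

theorem ASum_recurrence (l m : ℕ) :
    (m + 1 : ℚ) * (m + 1 - l) * ASum l (m + 1) =
      2 * (4 * m + 3 - 2 * l) * (m + 1 + l) * ASum l m - 4 * l * (l + 1) * ASum (l + 1) m := by
  have htel := sum_range_sub (cert l m) (m + 1)
  rw [cert_zero, sub_zero,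
    ← sum_congr rfl fun k hk => summand_telescope l m k (by simp at hk; omega)] at htel
  simp only [sum_add_distrib, sum_sub_distrib, ← mul_sum] at htel
  rw [ASum, sum_range_succ]
  unfold ASum
  linear_combination htel + summand_self l m

theorem A_succ_left_eq_mul_ASum (l p : ℕ) :
    A (l + 1) (l + p) = 2 * (l + 1) * l ! * (l + p) ! / 2 ^ p * ASum (l + 1) (l + p) := by
  rcases p with _ | q
  · simp [A_eq_zero_of_lt, ASum_eq_zero_of_lt]
  · rw [A_eq_mul_ASum, show l + (q + 1) - (l + 1) = q by omega]
    push_cast [factorial_succ, pow_succ]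
    field_simp

theorem A_recurrence (l p : ℕ) :
    (p + 1 : ℚ) * A l (l + p + 1) =
      (2 * l + 4 * p + 3) * (2 * l + p + 1) * A l (l + p) - l * A (l + 1) (l + p) := by
  have hrec := ASum_recurrence l (l + p)
  rw [A_eq_mul_ASum l (l + p + 1), A_eq_mul_ASum l (l + p), A_succ_left_eq_mul_ASum,
    show l + p + 1 - l = p + 1 by omega, show l + p - l = p by omega]
  push_cast [factorial_succ] at hrec ⊢
  linear_combination ((l ! : ℚ) * (l + p) ! / 2 ^ (p + 1)) * hrec

theorem A_pos {l m : ℕ} (h : l ≤ m) : 0 < A l m := by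
  have h₁ := Nat.choose_pos (show m - l ≤ 2 * m - 2 * l by omega)
  have h₂ := Nat.choose_pos (show m ≤ m + l by omega)
  refine mul_pos (by positivity) (sum_pos' (fun k _ => by positivity) ⟨l, ?_, ?_⟩)
  · exact mem_Icc.mpr ⟨le_rfl, h⟩
  · simp only [choose_self, cast_one, mul_one]
    positivity

theorem A_self (l : ℕ) : A l l = 2 ^ l * (2 * l) ! := by
  have h := choose_mul_factorial_mul_factorial (show l ≤ 2 * l by omega)
  rw [show 2 * l - l = l by omega] at h
  simp only [A, Icc_self, sum_singleton, Nat.sub_self, pow_zero, div_one, choose_self, cast_one,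
    mul_one, ← two_mul, ← h]
  push_cast
  ring

theorem padicValRat_A_self (l : ℕ) : padicValRat 2 (A l l) = l + padicValNat 2 (2 * l) ! := by
  have h2 : padicValRat 2 2 = 1 := by exact_mod_cast padicValRat.self (p := 2) one_lt_two
  rw [A_self, padicValRat.mul (by positivity) (by positivity), padicValRat.pow, h2,
    padicValRat.of_nat, mul_one]

theorem padicValNat_factorial_succ {p : ℕ} [Fact p.Prime] (n : ℕ) :
    padicValNat p (n + 1) ! = padicValNat p (n + 1) + padicValNat p n ! :=
  factorial_succ n ▸ padicValNat.mul n.succ_ne_zero n.factorial_ne_zero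

theorem padicValRat_sub_eq_left_of_lt {p : ℕ} [Fact p.Prime] {u v : ℚ} (hu : u ≠ 0)
    (h : v ≠ 0 → padicValRat p u < padicValRat p v) : padicValRat p (u - v) = padicValRat p u := by
  rcases eq_or_ne v 0 with rfl | hv
  · rw [sub_zero]
  have hlt := h hv
  have huv : u - v ≠ 0 := fun h' => hlt.ne (by rw [sub_eq_zero.mp h'])
  rw [sub_eq_add_neg] at huv ⊢
  rw [← padicValRat.neg v] at hlt
  exact padicValRat.add_eq_of_lt huv hu (neg_ne_zero.mpr hv) hlt

theorem padicValRat_A (l p : ℕ) :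
    padicValRat 2 (A l (l + p)) = l + padicValNat 2 (2 * l + p) ! - padicValNat 2 p ! := by
  induction p using Nat.strong_induction_on generalizing l with
  | _ p ih =>
  rcases p with _ | q
  · simpa using padicValRat_A_self l
  set u : ℚ := ((2 * l + 4 * q + 3 : ℕ) : ℚ) * ((2 * l + q + 1 : ℕ) : ℚ) * A l (l + q)
  set v : ℚ := l * A (l + 1) (l + q)
  have hrec : ((q + 1 : ℕ) : ℚ) * A l (l + q + 1) = u - v := by
    simp only [u, v]; push_cast; exact A_recurrence l q
  have hu : padicValRat 2 u = l + padicValNat 2 (2 * l + q + 1) ! - padicValNat 2 q ! := by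
    have hodd : padicValNat 2 (2 * l + 4 * q + 3) = 0 := padicValNat.eq_zero_of_not_dvd (by omega)
    rw [padicValRat.mul (by positivity) (A_pos (by omega)).ne',
      padicValRat.mul (by positivity) (by positivity), padicValRat.of_nat, padicValRat.of_nat,
      ih q (by omega), padicValNat_factorial_succ, hodd]
    push_cast
    ring
  have hsub : padicValRat 2 (u - v) = padicValRat 2 u := by
    refine padicValRat_sub_eq_left_of_lt (mul_ne_zero (by positivity) (A_pos (by omega)).ne') ?_
    intro hv0
    have hl : l ≠ 0 := by rintro rfl; simp [v] at hv0
    obtain ⟨r, rfl⟩ : ∃ r, q = r + 1 :=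
      Nat.exists_eq_add_one_of_ne_zero (by rintro rfl; simp [v, A_eq_zero_of_lt] at hv0)
    have hv : padicValRat 2 v = padicValNat 2 l + (l + 1 : ℤ) + padicValNat 2 (2 * (l + 1) + r) !
        - padicValNat 2 r ! := by
      rw [padicValRat.mul (by positivity) (A_pos (by omega)).ne', padicValRat.of_nat,
        show l + (r + 1) = l + 1 + r by omega, ih r (by omega)]
      push_cast
      ring
    have hfac := padicValNat_factorial_succ (p := 2) r
    rw [hu, hv, show 2 * (l + 1) + r = 2 * l + (r + 1) + 1 by ring]
    omega
  have hfac := padicValNat_factorial_succ (p := 2) q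
  have hval := congrArg (padicValRat 2) hrec
  rw [padicValRat.mul (by positivity) (A_pos (by omega)).ne', padicValRat.of_nat, hsub, hu] at hval
  rw [show 2 * l + (q + 1) = 2 * l + q + 1 by omega, show l + (q + 1) = l + q + 1 by omega]
  omega

theorem padicValRat_A_succ_sub (l p : ℕ) :
    padicValRat 2 (A l (l + p + 1)) - padicValRat 2 (A l (l + p)) =
      padicValNat 2 (2 * l + p + 1) - padicValNat 2 (p + 1) := by
  have h₁ := padicValNat_factorial_succ (p := 2) (2 * l + p)
  have h₂ := padicValNat_factorial_succ (p := 2) p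
  rw [add_assoc, padicValRat_A, padicValRat_A, ← add_assoc]
  omega

theorem padicValNat_two_odd_add_ne {u w : ℕ} (hu : Odd u) (hw : w ≠ 0) :
    padicValNat 2 (u + w) ≠ padicValNat 2 w := by
  rcases Nat.even_or_odd w with hw' | hw'
  · rw [padicValNat.eq_zero_of_not_dvd (hu.add_even hw').not_two_dvd_nat]
    exact (Nat.one_le_iff_ne_zero.mp (one_le_padicValNat_of_dvd hw hw'.two_dvd)).symm
  · rw [padicValNat.eq_zero_of_not_dvd hw'.not_two_dvd_nat]
    exact Nat.one_le_iff_ne_zero.mp (one_le_padicValNat_of_dvd (by omega) (hu.add_odd hw').two_dvd)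

theorem padicValNat_two_add_ne {a b : ℕ} (ha : a ≠ 0) (hb : b ≠ 0)
    (hab : 2 ^ padicValNat 2 a ∣ b) : padicValNat 2 (a + b) ≠ padicValNat 2 b := by
  obtain ⟨w, rfl⟩ := hab
  have hw : w ≠ 0 := right_ne_zero_of_mul hb
  have hu : Odd (a.divMaxPow 2) :=
    Nat.not_even_iff_odd.mp (mt Even.two_dvd (Nat.not_dvd_divMaxPow one_lt_two ha))
  have hu0 : a.divMaxPow 2 ≠ 0 := hu.pos.ne'
  nth_rewrite 1 [← Nat.pow_padicValNat_mul_divMaxPow 2 a]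
  rw [← mul_add, padicValNat.mul (by positivity) (by omega), padicValNat.mul (by positivity) hw]
  exact fun h => padicValNat_two_odd_add_ne hu hw (Nat.add_left_cancel h)

theorem val_A_block_change (l : ℕ) (h : 1 ≤ l) (k : ℕ) :
    padicValRat 2 (A l (l + (k + 1) * 2 ^ (1 + padicValNat 2 l))) ≠
      padicValRat 2 (A l (l + (k + 1) * 2 ^ (1 + padicValNat 2 l) - 1)) := by
  set N := (k + 1) * 2 ^ (1 + padicValNat 2 l)
  have hN : N ≠ 0 := by positivity
  have hval2l : padicValNat 2 (2 * l) = 1 + padicValNat 2 l := by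
    rw [padicValNat.mul two_ne_zero (by omega), padicValNat_self]
  have hne : padicValNat 2 (2 * l + N) ≠ padicValNat 2 N :=
    padicValNat_two_add_ne (by omega) hN (hval2l ▸ Dvd.intro_left _ rfl)
  obtain ⟨p, hp⟩ := Nat.exists_eq_add_one_of_ne_zero hN
  have hstep := padicValRat_A_succ_sub l p
  rw [hp, ← add_assoc, Nat.add_sub_cancel]
  rw [hp, ← add_assoc] at hne
  omega
end

section
/- For l ≥ 1 and m ≥ l, ν₂(A_{2l, 2m}) = 3l + ν₂(A_{l,m}). -/
open Finset

open Nat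

/-!
Write `m = l + d`. The sum defining `A l m` satisfies a three-term recurrence, found by
Zeilberger's algorithm and certified by `A.cert`. For `B = A.unitPart`, that is
`B l d = A l (l + d) * d! / (2 ^ l * (2l + d)!)`, it reads
`(4m + 3)(4m + 5) B l d = (4m + 2l + 5) B l (d + 1) + 2l(2l + d + 2) B (l + 1) d`.
The outer coefficients are odd, the last term is even and `B l 0 = 1`, so induction on `d` shows
that every `B l d` is a 2-adic unit: `ν₂(A l (l + d)) = l + ν₂((2l + d)!) - ν₂(d!)`.
The theorem follows from `ν₂((2n)!) = n + ν₂(n!)`.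
-/

theorem padicNorm_sub_eq_left_of_lt {p : ℕ} [Fact p.Prime] {q r : ℚ}
    (h : padicNorm p r < padicNorm p q) :
    padicNorm p (q - r) = padicNorm p q := by
  rw [sub_eq_add_neg, padicNorm.add_eq_max_of_ne (by rw [padicNorm.neg]; exact h.ne'),
    padicNorm.neg, max_eq_left h.le]

namespace A

def term (l m k : ℕ) : ℚ :=
  2 ^ k * ((2 * m - 2 * k).choose (m - k)) * ((m + k).choose m) * (k.choose l)

def termSum (l m : ℕ) : ℚ := ∑ k ∈ Icc l m, term l m k

theorem eq_mul_termSum (l m : ℕ) : A l m = (l ! * m ! : ℕ) / 2 ^ (m - l) * termSum l m := rfl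

theorem term_eq_centralBinom (l m k : ℕ) :
    term l m k = 2 ^ k * centralBinom (m - k) * (m + k).choose m * k.choose l := by
  rw [term, centralBinom_eq_two_mul_choose, Nat.mul_sub]

theorem term_succ_left {l k : ℕ} (m : ℕ) (h : l ≤ k) :
    term (l + 1) m k = (k - l) / (l + 1) * term l m k := by
  have key := choose_succ_right_eq k l
  rw [← cast_inj (R := ℚ)] at key
  push_cast [h] at key
  rw [term, term, div_mul_eq_mul_div, eq_div_iff (by positivity)]
  linear_combination (2 ^ k * ((2 * m - 2 * k).choose (m - k) : ℚ) * ((m + k).choose m : ℚ)) * key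

theorem term_succ_middle (l : ℕ) {m k : ℕ} (h : k ≤ m) :
    term l (m + 1) k
      = 2 * (2 * (m - k) + 1) * (m + k + 1) / ((m - k + 1) * (m + 1)) * term l m k := by
  obtain ⟨j, rfl⟩ := exists_add_of_le h
  have hc := succ_mul_centralBinom_succ j
  have hb := add_one_mul_choose_eq (k + j + k) (k + j)
  rw [← cast_inj (R := ℚ)] at hc hb
  simp only [term_eq_centralBinom, show k + j + 1 - k = j + 1 by omega, Nat.add_sub_cancel_left,
    show k + j + 1 + k = k + j + k + 1 by omega]
  push_cast at hc hb ⊢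
  field_simp
  linear_combination
    (k.choose l : ℚ) * (((k + j + k + 1).choose (k + j + 1) : ℚ) * (k + j + 1)) * hc
      - (k.choose l : ℚ) * (2 * (2 * j + 1) * (centralBinom j : ℚ)) * hb

theorem term_succ_middle_succ_right {l k : ℕ} (m : ℕ) (h : l ≤ k) :
    term l (m + 1) (k + 1)
      = 2 * (m + k + 1) * (m + k + 2) / ((m + 1) * (k + 1 - l)) * term l m k := by
  have h1 := add_one_mul_choose_eq (m + k) m
  have h2 := choose_mul_succ_eq (m + k + 1) (m + 1)
  have h3 := choose_mul_succ_eq k l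
  rw [← cast_inj (R := ℚ)] at h1 h2 h3
  simp only [term_eq_centralBinom, Nat.add_sub_add_right,
    show m + 1 + (k + 1) = m + k + 1 + 1 by omega]
  rw [show m + k + 1 + 1 - (m + 1) = k + 1 by omega] at h2
  push_cast [h, show l ≤ k + 1 by omega] at h1 h2 h3 ⊢
  have hlk : (l : ℚ) ≤ k := by exact_mod_cast h
  rw [div_mul_eq_mul_div, eq_div_iff (mul_pos (by positivity) (by linarith)).ne']
  linear_combination -(centralBinom (m - k) : ℚ) * 2 ^ (k + 1) *
    ((m + k + 2) * (k.choose l : ℚ) * h1 + (m + 1) * (k.choose l : ℚ) * h2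
      + (m + 1) * ((m + k + 1 + 1).choose (m + 1) : ℚ) * h3)

def cert (l m k : ℕ) : ℚ :=
  2 * (k - l) * (2 * l * k + (m + 1) * (4 * m + 2 * l + 5)) * (m + 1) / (m + k + 1)
    * term l (m + 1) k

theorem term_recurrence {l m k : ℕ} (hlk : l ≤ k) (hkm : k ≤ m) :
    2 * (4 * m + 3) * (4 * m + 5) * (m + l + 1) * term l m k
      - (4 * m + 2 * l + 5) * (m + 1) * (m + 1 - l) * term l (m + 1) k
      - 2 * l * (l + 1) * (m + 1) * term (l + 1) (m + 1) k
      = cert l m (k + 1) - cert l m k := by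
  have hl : (l : ℚ) ≤ k := by exact_mod_cast hlk
  have hm : (k : ℚ) ≤ m := by exact_mod_cast hkm
  rw [cert, cert, term_succ_left (m + 1) hlk, term_succ_middle_succ_right m hlk,
    term_succ_middle l hkm]
  have : (k : ℚ) + 1 - l ≠ 0 := by linarith
  have : (m : ℚ) - k + 1 ≠ 0 := by linarith
  push_cast
  field_simp
  ring

theorem termSum_succ_left (l m : ℕ) : termSum (l + 1) m = ∑ k ∈ Icc l m, term (l + 1) m k := by
  refine sum_subset (Icc_subset_Icc_left l.le_succ) fun k hk hk' => ?_
  simp only [mem_Icc] at hk hk'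
  simp [term, choose_eq_zero_of_lt (show k < l + 1 by omega)]

theorem termSum_recurrence {l m : ℕ} (h : l ≤ m) :
    2 * (4 * m + 3) * (4 * m + 5) * (m + l + 1) * termSum l m
      = (4 * m + 2 * l + 5) * (m + 1) * (m + 1 - l) * termSum l (m + 1)
        + 2 * l * (l + 1) * (m + 1) * termSum (l + 1) (m + 1) := by
  have tele := sum_Icc_sub h (cert l m)
  rw [← sum_congr rfl fun k hk => term_recurrence (mem_Icc.1 hk).1 (mem_Icc.1 hk).2] at tele
  simp only [sum_sub_distrib, ← mul_sum] at tele
  have bot : cert l m l = 0 := by simp [cert]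
  have top : cert l m (m + 1) = (4 * m + 2 * l + 5) * (m + 1) * (m + 1 - l) * term l (m + 1) (m + 1)
      + 2 * l * (l + 1) * (m + 1) * term (l + 1) (m + 1) (m + 1) := by
    rw [cert, term_succ_left (m + 1) (by omega)]
    push_cast
    field_simp
    ring
  have s1 : termSum l (m + 1) = ∑ k ∈ Icc l m, term l (m + 1) k + term l (m + 1) (m + 1) :=
    sum_Icc_succ_top (by omega) _
  have s2 : termSum (l + 1) (m + 1)
      = ∑ k ∈ Icc l m, term (l + 1) (m + 1) k + term (l + 1) (m + 1) (m + 1) := by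
    rw [termSum_succ_left, sum_Icc_succ_top (by omega)]
  rw [s1, s2, termSum]
  linear_combination tele + top - bot

noncomputable def unitPart (l d : ℕ) : ℚ := A l (l + d) * d ! / (2 ^ l * (2 * l + d)!)

theorem unitPart_zero (l : ℕ) : unitPart l 0 = 1 := by
  have hc : ((l + l).choose l : ℚ) = (l + l)! / (l ! * l !) := cast_add_choose ℚ
  simp only [← two_mul, unitPart, add_zero, eq_mul_termSum, cast_mul, tsub_self, pow_zero, div_one,
    termSum, Icc_self, term, sum_singleton, choose_self, cast_one, mul_one, factorial_zero] at hc ⊢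
  rw [hc]
  field_simp

theorem unitPart_recurrence (l d : ℕ) :
    (4 * (l + d) + 3) * (4 * (l + d) + 5) * unitPart l d
      = (4 * (l + d) + 2 * l + 5) * unitPart l (d + 1)
        + 2 * l * (2 * l + d + 2) * unitPart (l + 1) d := by
  have hrec := termSum_recurrence (show l ≤ l + d by omega)
  simp only [unitPart, eq_mul_termSum, show l + (d + 1) = l + d + 1 by omega,
    show l + 1 + d = l + d + 1 by omega, show 2 * (l + 1) + d = 2 * l + d + 1 + 1 by omega,
    show 2 * l + (d + 1) = 2 * l + d + 1 by omega, Nat.add_sub_cancel_left,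
    show l + d + 1 - l = d + 1 by omega, show l + d + 1 - (l + 1) = d by omega, factorial_succ]
  push_cast at hrec ⊢
  field_simp
  linear_combination 2 ^ (l + d + 1) * (2 * (l : ℚ) + d + 2) * hrec

theorem padicNorm_unitPart (l d : ℕ) : padicNorm 2 (unitPart l d) = 1 := by
  induction d generalizing l with
  | zero => simp [unitPart_zero]
  | succ d ih =>
    have hodd {n : ℕ} (hn : n % 2 = 1) : padicNorm 2 n = 1 :=
      (padicNorm.nat_eq_one_iff n).2 (by omega)
    have hsolve : unitPart l (d + 1)
        = ((4 * (l + d) + 3 : ℕ) * (4 * (l + d) + 5 : ℕ) * unitPart l d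
          - 2 * ((l * (2 * l + d + 2) : ℕ) * unitPart (l + 1) d))
          / (4 * (l + d) + 2 * l + 5 : ℕ) := by
      rw [eq_div_iff (by positivity)]
      push_cast
      linear_combination -unitPart_recurrence l d
    have hunit :
        padicNorm 2 ((4 * (l + d) + 3 : ℕ) * (4 * (l + d) + 5 : ℕ) * unitPart l d) = 1 := by
      rw [padicNorm.mul, padicNorm.mul, hodd (by omega), hodd (by omega), ih, one_mul, one_mul]
    have htwo : padicNorm 2 2 < 1 := mod_cast padicNorm.padicNorm_p_lt_one_of_prime (p := 2)
    have hsmall : padicNorm 2 (2 * ((l * (2 * l + d + 2) : ℕ) * unitPart (l + 1) d)) < 1 := by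
      rw [padicNorm.mul, padicNorm.mul, ih, mul_one]
      nlinarith [padicNorm.of_nat (p := 2) (l * (2 * l + d + 2)), padicNorm.nonneg (p := 2) 2]
    rw [hsolve, padicNorm.div, padicNorm_sub_eq_left_of_lt (hunit ▸ hsmall), hunit, hodd (by omega),
      div_one]

theorem padicValRat_two (l d : ℕ) :
    padicValRat 2 (A l (l + d)) = l + padicValNat 2 (2 * l + d)! - padicValNat 2 d ! := by
  have hB : unitPart l d ≠ 0 := fun h => by simpa [h] using padicNorm_unitPart l d
  have hval : padicValRat 2 (unitPart l d) = 0 := by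
    have := padicNorm.eq_zpow_of_nonzero (p := 2) hB
    rwa [padicNorm_unitPart, eq_comm, zpow_eq_one_iff_right₀ (by norm_num) (by norm_num),
      neg_eq_zero] at this
  have hA : A l (l + d) = 2 ^ l * (2 * l + d)! / d ! * unitPart l d := by
    rw [unitPart]
    field_simp
  rw [hA, padicValRat.mul (by positivity) hB, padicValRat.div (by positivity) (by positivity),
    padicValRat.mul (by positivity) (by positivity), padicValRat.pow, hval,
    padicValRat.of_nat, padicValRat.of_nat, show padicValRat 2 2 = 1 by
      exact_mod_cast padicValRat.self one_lt_two]
  ring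

end A

theorem val_A_double_general (l m : ℕ) (hm : l ≤ m) :
    padicValRat 2 (A (2 * l) (2 * m)) = 3 * l + padicValRat 2 (A l m) := by
  obtain ⟨d, rfl⟩ := exists_add_of_le hm
  rw [mul_add, A.padicValRat_two, A.padicValRat_two, ← mul_add,
    padicValNat_factorial_mul, padicValNat_factorial_mul]
  push_cast
  ring

theorem val_A_double (l m : ℕ) (hl : 1 ≤ l) (hm : l ≤ m) :
    padicValRat 2 (A (2 * l) (2 * m)) = 3 * l + padicValRat 2 (A l m) :=
  val_A_double_general l m hm
end
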